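/- Let P = k[x_1, x_2, x_3] over a field k of characteristic p > 3 with Jacobian structure given by a reducible homogeneous cubic potential Ω = x_1·b where x_1 does not divide b and b is a homogeneous quadratic. Then x_1 is a Poisson normal element of P which is not Poisson central; consequently the log-ozone group of P is nontrivial. -/
import Mathlib


open MvPolynomial

/-- The Jacobian bracket on `k[x₁,x₂,x₃]` with potential `Ω`:
`{g,f}` is the determinant of the Jacobian matrix of `(g, f, Ω)`. -/
noncomputable def jacBr {k : Type*} [CommRing k] (Ω g f : MvPolynomial (Fin 3) k) :
    MvPolynomial (Fin 3) k :=
  Matrix.det !![pderiv 0 g, pderiv 1 g, pderiv 2 g;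
                pderiv 0 f, pderiv 1 f, pderiv 2 f;
                pderiv 0 Ω, pderiv 1 Ω, pderiv 2 Ω]

lemma X_mul_pderiv_monomial' {k : Type*} [CommSemiring k] (i : Fin 3) (m : Fin 3 →₀ ℕ) (a : k) :
    X i * pderiv i (monomial m a) = monomial m (m i • a) := by
  rcases Nat.eq_zero_or_pos (m i) with h | h
  · simp [h]
  · rw [pderiv_monomial, X, monomial_mul, one_mul,
      add_tsub_cancel_of_le (Finsupp.single_le_iff.mpr h)]
    congr 1
    rw [nsmul_eq_mul, mul_comm]

/-- Euler's identity for homogeneous polynomials in three variables. -/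
lemma euler3 {k : Type*} [CommSemiring k] {n : ℕ} {b : MvPolynomial (Fin 3) k}
    (hb : b.IsHomogeneous n) : ∑ i : Fin 3, X i * pderiv i b = n • b := by
  conv_lhs => rw [b.as_sum]
  simp_rw [map_sum, Finset.mul_sum]
  rw [Finset.sum_comm]
  conv_rhs => rw [b.as_sum, Finset.smul_sum]
  refine Finset.sum_congr rfl fun m hm => ?_
  have hsum : ∑ i : Fin 3, m i = n := by
    have hdeg : m.degree = n := by
      rw [Finsupp.degree_eq_weight_one]
      exact hb (mem_support_iff.mp hm)
    rw [← hdeg, Finsupp.degree]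
    exact (Finset.sum_subset (Finset.subset_univ _)
      (fun i _ hi => Finsupp.notMem_support_iff.mp hi)).symm
  calc ∑ i : Fin 3, X i * pderiv i (monomial m (coeff m b))
      = ∑ i : Fin 3, monomial m (m i • coeff m b) :=
        Finset.sum_congr rfl fun i _ => X_mul_pderiv_monomial' i m _
    _ = monomial m ((∑ i : Fin 3, m i) • coeff m b) := by
        rw [Finset.sum_smul, map_sum]
    _ = n • monomial m (coeff m b) := by rw [hsum, map_nsmul]

/-- The key computation: `{a, x₁} = x₁ · (∂₃a·∂₂b − ∂₂a·∂₃b)` for `Ω = x₁·b`. -/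
lemma jacBr_X0 {k : Type*} [CommRing k] (b a : MvPolynomial (Fin 3) k) :
    jacBr (X 0 * b) a (X 0)
      = X 0 * (pderiv 2 a * pderiv 1 b - pderiv 1 a * pderiv 2 b) := by
  simp [jacBr, Matrix.det_fin_three, pderiv_mul, pderiv_X_self,
    pderiv_X_of_ne (show (0:Fin 3) ≠ 1 by decide),
    pderiv_X_of_ne (show (0:Fin 3) ≠ 2 by decide)]
  ring

/-- Let `P = k[x₁,x₂,x₃]` over a field of characteristic `p > 3` with Jacobian
structure of reducible homogeneous cubic potential `Ω = x₁·b`, where `b` is a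
homogeneous quadratic not divisible by `x₁`. Then `x₁` is Poisson normal
(`x₁ ∣ {a, x₁}` for all `a`) but not Poisson central; consequently the log-ozone
group of `P` is nontrivial. -/
theorem stmt19 {k : Type*} [Field k] (p : ℕ) (hp : 3 < p) (hpp : p.Prime) [CharP k p]
    (b : MvPolynomial (Fin 3) k) (hb : b.IsHomogeneous 2) (hnd : ¬ (X 0 ∣ b)) :
    (∀ a, X 0 ∣ jacBr (X 0 * b) a (X 0)) ∧
    ¬ (∀ a, jacBr (X 0 * b) a (X 0) = 0) := by
  constructor
  · intro a
    rw [jacBr_X0]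
    exact Dvd.intro _ rfl
  · intro hz
    have hX0 : (X 0 : MvPolynomial (Fin 3) k) ≠ 0 := X_ne_zero 0
    have h2 : pderiv 2 b = 0 := by
      have := hz (X 1)
      rw [jacBr_X0, pderiv_X_of_ne (show (1:Fin 3) ≠ 2 by decide), pderiv_X_self,
        zero_mul, one_mul, zero_sub, mul_neg, neg_eq_zero, mul_eq_zero] at this
      exact this.resolve_left hX0
    have h1 : pderiv 1 b = 0 := by
      have := hz (X 2)
      rw [jacBr_X0, pderiv_X_of_ne (show (2:Fin 3) ≠ 1 by decide), pderiv_X_self,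
        zero_mul, one_mul, sub_zero, mul_eq_zero] at this
      exact this.resolve_left hX0
    have heuler := euler3 hb
    rw [Fin.sum_univ_three, h1, h2] at heuler
    simp only [mul_zero, add_zero] at heuler
    -- heuler : X 0 * pderiv 0 b = 2 • b
    have h2k : (2 : k) ≠ 0 := by
      have h2n : ((2:ℕ) : k) ≠ 0 := by
        rw [Ne, CharP.cast_eq_zero_iff k p]
        intro h
        exact absurd (Nat.le_of_dvd two_pos h) (by omega)
      simpa using h2n
    apply hnd
    refine ⟨C (2:k)⁻¹ * pderiv 0 b, ?_⟩
    have : (2:ℕ) • b = C (2:k) * b := by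
      rw [nsmul_eq_mul]
      congr 1
    rw [this] at heuler
    calc b = C (2:k)⁻¹ * (C (2:k) * b) := by
            rw [← mul_assoc, ← C_mul, inv_mul_cancel₀ h2k, C_1, one_mul]
      _ = X 0 * (C (2:k)⁻¹ * pderiv 0 b) := by rw [← heuler]; ring
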